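/- Let (Xₙ)_{n ≥ 1} be a strictly stationary sequence of associated, mean-zero, square-integrable random variables with Var(X₁) + 2·Σ_{j=2}^∞ Cov(X₁, X_j) < ∞, let Sₙ = X₁ + ⋯ + Xₙ, and for fixed integers ℓ ≥ 1 and n ≥ ℓ set m = ⌊n/ℓ⌋. Then Var(Sₙ/√n − S_{mℓ}/√(mℓ)) ≤ Var(S_{n−mℓ})/n + (1 − √(mℓ/n))²·Var(S_{mℓ}/√(mℓ)); in particular, for each fixed ℓ this quantity tends to 0 as n → ∞. -/

import Mathlib

open MeasureTheory ProbabilityTheory Filter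

/-- Covariance `E(XY) - E(X)E(Y)` of real random variables. -/
noncomputable def cov {Ω : Type*} [MeasurableSpace Ω] (μ : Measure Ω) (X Y : Ω → ℝ) : ℝ :=
  (∫ ω, X ω * Y ω ∂μ) - (∫ ω, X ω ∂μ) * (∫ ω, Y ω ∂μ)

/-- A finite family of random variables is associated if every pair of coordinatewise
nondecreasing measurable functions of it with square-integrable compositions has
nonnegative covariance. -/
def IsAssociated {Ω : Type*} [MeasurableSpace Ω] (μ : Measure Ω) {n : ℕ}
    (X : Fin n → Ω → ℝ) : Prop :=
  ∀ f g : (Fin n → ℝ) → ℝ, Monotone f → Monotone g → Measurable f → Measurable g →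
    MemLp (fun ω => f (fun i => X i ω)) 2 μ →
    MemLp (fun ω => g (fun i => X i ω)) 2 μ →
    0 ≤ cov μ (fun ω => f (fun i => X i ω)) (fun ω => g (fun i => X i ω))

/-!
Put `k = ⌊n/ℓ⌋ ℓ`, `A = S_k` and `B = S_n - S_k`. Then
`S_n/√n - S_k/√k = B/√n - (1 - √(k/n)) · A/√k`, and expanding the variance gives the claimed bound
minus the cross term `2 (1 - √(k/n)) Cov(B, A/√k) / √n`, which is nonnegative because `A` and `B`
are nondecreasing functions of the associated vector `(X₁, …, X_n)`. By stationarity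
`Var B = Var S_{n-k}`, and since association makes all covariances nonnegative,
`Var S_r ≤ r σ²`. As `n - k < ℓ` and `(1 - √x)² ≤ 1 - x`, the bound is at most `2 ℓ σ² / n`.
-/

open Finset

lemma Real.one_sub_sqrt_sq_le {x : ℝ} (hx₀ : 0 ≤ x) (hx₁ : x ≤ 1) : (1 - √x) ^ 2 ≤ 1 - x := by
  nlinarith [Real.sq_sqrt hx₀, Real.sqrt_nonneg x, Real.sqrt_le_one.mpr hx₁]

namespace ProbabilityTheory

variable {Ω : Type*} [MeasurableSpace Ω] {μ : Measure Ω}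

lemma cov_eq_covariance [IsProbabilityMeasure μ] {X Y : Ω → ℝ} (hX : MemLp X 2 μ)
    (hY : MemLp Y 2 μ) : cov μ X Y = cov[X, Y; μ] := by
  rw [covariance_eq_sub hX hY, cov]
  rfl

lemma variance_const_mul_sub_const_mul_le [IsFiniteMeasure μ] {X Y : Ω → ℝ} (hX : MemLp X 2 μ)
    (hY : MemLp Y 2 μ) (hXY : 0 ≤ cov[X, Y; μ]) {a b : ℝ} (ha : 0 ≤ a) (hb : 0 ≤ b) :
    Var[fun ω => a * X ω - b * Y ω; μ] ≤ a ^ 2 * Var[X; μ] + b ^ 2 * Var[Y; μ] := by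
  rw [variance_fun_sub (hX.const_mul a) (hY.const_mul b), variance_const_mul, variance_const_mul,
    covariance_const_mul_left, covariance_const_mul_right]
  nlinarith [mul_nonneg (mul_nonneg ha hb) hXY]

lemma variance_add_div_sqrt_sub_div_sqrt_le [IsFiniteMeasure μ] {A B : Ω → ℝ} (hA : MemLp A 2 μ)
    (hB : MemLp B 2 μ) (hBA : 0 ≤ cov[B, A; μ]) {k n : ℝ} (hk : 0 < k) (hkn : k ≤ n) :
    Var[fun ω => (A ω + B ω) / √n - A ω / √k; μ]
      ≤ Var[B; μ] / n + (1 - √(k / n)) ^ 2 * Var[fun ω => A ω / √k; μ] := by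
  have hn : 0 < n := hk.trans_le hkn
  have hc : 0 ≤ 1 - √(k / n) := sub_nonneg.2 (Real.sqrt_le_one.2 ((div_le_one hn).2 hkn))
  have hdecomp : (fun ω => (A ω + B ω) / √n - A ω / √k)
      = fun ω => (√n)⁻¹ * B ω - (1 - √(k / n)) * (A ω / √k) := by
    ext ω
    rw [Real.sqrt_div hk.le]
    field_simp
    ring
  have hA' : MemLp (fun ω => A ω / √k) 2 μ := by
    simpa only [div_eq_mul_inv] using hA.mul_const (√k)⁻¹
  have key := variance_const_mul_sub_const_mul_le hB hA'
    (by rw [covariance_fun_div_right]; positivity) (inv_nonneg.2 (Real.sqrt_nonneg n)) hc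
  have hscale : (√n)⁻¹ ^ 2 * Var[B; μ] = Var[B; μ] / n := by
    rw [inv_pow, Real.sq_sqrt hn.le, inv_mul_eq_div]
  rwa [hdecomp, ← hscale]

lemma variance_sum_range_le_of_covariance_eq [IsFiniteMeasure μ] {X : ℕ → Ω → ℝ}
    (hX : ∀ i, MemLp (X i) 2 μ) {γ : ℕ → ℝ} (hγ : ∀ i d, cov[X i, X (i + d); μ] = γ d)
    (hγ_nonneg : ∀ d, 0 ≤ γ (d + 1)) (hγ_sum : Summable fun d => γ (d + 1)) (k : ℕ) :
    Var[∑ i ∈ range k, X i; μ] ≤ k * (γ 0 + 2 * ∑' d, γ (d + 1)) := by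
  induction k with
  | zero => simp
  | succ k ih =>
    have hlast : Var[X k; μ] = γ 0 := by
      rw [← covariance_self (hX k).aemeasurable, ← hγ k 0, add_zero]
    have hcross : cov[∑ i ∈ range k, X i, X k; μ] ≤ ∑' d, γ (d + 1) := by
      -- the lag `k - i` in the shape that `sum_range_reflect` turns into `γ (d + 1)`, `d < k`
      have hlag : ∀ i ∈ range k, cov[X i, X k; μ] = γ (k - 1 - i + 1) := by
        intro i hi
        rw [← hγ]
        congr 2
        have := mem_range.1 hi
        omega
      rw [covariance_sum_left' (fun i _ => hX i) (hX k), sum_congr rfl hlag,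
        sum_range_reflect (fun d => γ (d + 1))]
      exact hγ_sum.sum_le_tsum _ fun d _ => hγ_nonneg d
    rw [sum_range_succ, variance_add (memLp_finsetSum' _ fun i _ => hX i) (hX k), hlast]
    push_cast
    linarith

variable {X : ℕ → Ω → ℝ}

lemma covariance_sum_sum_nonneg_of_isAssociated [IsProbabilityMeasure μ]
    (hassoc : ∀ n : ℕ, IsAssociated μ (fun i : Fin n => X (i : ℕ)))
    (hX : ∀ i, MemLp (X i) 2 μ) (s t : Finset ℕ) :
    0 ≤ cov[∑ i ∈ s, X i, ∑ i ∈ t, X i; μ] := by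
  obtain ⟨N, hN⟩ := exists_nat_subset_range (s ∪ t)
  let blockSum (u : Finset ℕ) (hu : u ⊆ range N) (v : Fin N → ℝ) : ℝ :=
    ∑ i ∈ u.attach, v ⟨i, mem_range.1 (hu i.2)⟩
  have hcomp : ∀ u hu, (fun ω => blockSum u hu (fun i => X i ω)) = ∑ i ∈ u, X i := by
    intro u hu
    ext ω
    rw [Finset.sum_apply]
    exact sum_attach u fun i => X i ω
  have hmono : ∀ u hu, Monotone (blockSum u hu) :=
    fun u hu v w hvw => sum_le_sum fun i _ => hvw _
  have hmeas : ∀ u hu, Measurable (blockSum u hu) :=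
    fun u hu => Finset.measurable_sum _ fun i _ => measurable_pi_apply _
  have hmem : ∀ u : Finset ℕ, MemLp (∑ i ∈ u, X i) 2 μ :=
    fun u => memLp_finsetSum' _ fun i _ => hX i
  have hs : s ⊆ range N := subset_union_left.trans hN
  have ht : t ⊆ range N := subset_union_right.trans hN
  have h := hassoc N _ _ (hmono s hs) (hmono t ht) (hmeas s hs) (hmeas t ht)
    (by rw [hcomp s hs]; exact hmem s) (by rw [hcomp t ht]; exact hmem t)
  rwa [hcomp s hs, hcomp t ht, cov_eq_covariance (hmem s) (hmem t)] at h

def IsStationary (X : ℕ → Ω → ℝ) (μ : Measure Ω) : Prop :=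
  ∀ n k : ℕ, Measure.map (fun ω => fun i : Fin n => X ((i : ℕ) + k) ω) μ
    = Measure.map (fun ω => fun i : Fin n => X (i : ℕ) ω) μ

lemma IsStationary.covariance_eq (hstat : IsStationary X μ) (hX : ∀ i, MemLp (X i) 2 μ)
    (i d : ℕ) : cov[X i, X (i + d); μ] = cov[X 0, X d; μ] := by
  have hwindow : ∀ k, AEMeasurable (fun ω => fun j : Fin (d + 1) => X (j + k) ω) μ :=
    fun k => aemeasurable_pi_lambda _ fun j => (hX _).aemeasurable
  have hcoord : ∀ (j : Fin (d + 1)) (ν : Measure (Fin (d + 1) → ℝ)),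
      AEStronglyMeasurable (fun v => v j) ν :=
    fun j ν => (measurable_pi_apply j).aestronglyMeasurable
  have := congrArg (fun ν => cov[fun v => v 0, fun v => v (Fin.last d); ν]) (hstat (d + 1) i)
  rw [covariance_map_fun (hcoord _ _) (hcoord _ _) (hwindow i),
    covariance_map_fun (hcoord _ _) (hcoord _ _) (by simpa using hwindow 0)] at this
  simpa [add_comm i] using this

lemma IsStationary.variance_sum_range_add (hstat : IsStationary X μ) (hX : ∀ i, MemLp (X i) 2 μ)
    (k r : ℕ) : Var[∑ j ∈ range r, X (k + j); μ] = Var[∑ j ∈ range r, X j; μ] := by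
  have hwindow : ∀ k, AEMeasurable (fun ω => fun j : Fin r => X (j + k) ω) μ :=
    fun k => aemeasurable_pi_lambda _ fun j => (hX _).aemeasurable
  have := congrArg (fun ν => Var[fun v => ∑ j, v j; ν]) (hstat r k)
  rw [variance_map (by fun_prop) (hwindow k),
    variance_map (by fun_prop) (by simpa using hwindow 0)] at this
  convert this using 2 <;> ext ω
  · simp only [Finset.sum_apply, Function.comp_apply, add_comm _ k]
    exact (Fin.sum_univ_eq_sum_range (fun j => X (k + j) ω) r).symm
  · simp only [Finset.sum_apply, Function.comp_apply]
    exact (Fin.sum_univ_eq_sum_range (fun j => X j ω) r).symm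

/-- The paper's `σ²`. -/
noncomputable def longRunVariance (X : ℕ → Ω → ℝ) (μ : Measure Ω) : ℝ :=
  Var[X 0; μ] + 2 * ∑' d, cov[X 0, X (d + 1); μ]

section StationaryAssociated

variable [IsProbabilityMeasure μ]

lemma variance_sum_range_le_mul_longRunVariance
    (hX : ∀ i, MemLp (X i) 2 μ) (hstat : IsStationary X μ)
    (hassoc : ∀ n : ℕ, IsAssociated μ (fun i : Fin n => X (i : ℕ)))
    (hsum : Summable fun d => cov[X 0, X (d + 1); μ]) (k : ℕ) :
    Var[∑ i ∈ range k, X i; μ] ≤ k * longRunVariance X μ := by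
  have hcov_nonneg : ∀ d, 0 ≤ cov[X 0, X (d + 1); μ] := fun d => by
    simpa using covariance_sum_sum_nonneg_of_isAssociated hassoc hX {0} {d + 1}
  have h := variance_sum_range_le_of_covariance_eq hX (hstat.covariance_eq hX) hcov_nonneg hsum k
  rwa [covariance_self (hX 0).aemeasurable] at h

lemma longRunVariance_nonneg
    (hX : ∀ i, MemLp (X i) 2 μ) (hstat : IsStationary X μ)
    (hassoc : ∀ n : ℕ, IsAssociated μ (fun i : Fin n => X (i : ℕ)))
    (hsum : Summable fun d => cov[X 0, X (d + 1); μ]) :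
    0 ≤ longRunVariance X μ := by
  simpa using (variance_nonneg _ μ).trans
    (variance_sum_range_le_mul_longRunVariance hX hstat hassoc hsum 1)

lemma variance_normalized_sum_sub_le
    (hX : ∀ i, MemLp (X i) 2 μ) (hstat : IsStationary X μ)
    (hassoc : ∀ n : ℕ, IsAssociated μ (fun i : Fin n => X (i : ℕ)))
    {k n : ℕ} (hk : 0 < k) (hkn : k ≤ n) :
    Var[fun ω => (∑ i ∈ range n, X i) ω / √n - (∑ i ∈ range k, X i) ω / √k; μ]
      ≤ Var[∑ i ∈ range (n - k), X i; μ] / n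
        + (1 - √((k : ℝ) / n)) ^ 2 * Var[fun ω => (∑ i ∈ range k, X i) ω / √k; μ] := by
  have hmem : ∀ u : Finset ℕ, MemLp (∑ i ∈ u, X i) 2 μ :=
    fun u => memLp_finsetSum' _ fun i _ => hX i
  have htail : Var[∑ i ∈ Ico k n, X i; μ] = Var[∑ i ∈ range (n - k), X i; μ] := by
    rw [sum_Ico_eq_sum_range, hstat.variance_sum_range_add hX]
  rw [← sum_range_add_sum_Ico _ hkn, ← htail]
  exact variance_add_div_sqrt_sub_div_sqrt_le (hmem _) (hmem _)
    (covariance_sum_sum_nonneg_of_isAssociated hassoc hX _ _) (by exact_mod_cast hk)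
    (by exact_mod_cast hkn)

lemma variance_normalized_sum_sub_le_mul
    (hX : ∀ i, MemLp (X i) 2 μ) (hstat : IsStationary X μ)
    (hassoc : ∀ n : ℕ, IsAssociated μ (fun i : Fin n => X (i : ℕ)))
    (hsum : Summable fun d => cov[X 0, X (d + 1); μ]) {k n : ℕ} (hk : 0 < k) (hkn : k ≤ n) :
    Var[fun ω => (∑ i ∈ range n, X i) ω / √n - (∑ i ∈ range k, X i) ω / √k; μ]
      ≤ 2 * (n - k : ℕ) * longRunVariance X μ / n := by
  have hkR : (0 : ℝ) < k := by exact_mod_cast hk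
  have hnR : (0 : ℝ) < n := by exact_mod_cast hk.trans_le hkn
  have hpartial := variance_sum_range_le_mul_longRunVariance hX hstat hassoc hsum
  have hnormalized : Var[fun ω => (∑ i ∈ range k, X i) ω / √k; μ] ≤ longRunVariance X μ := by
    simp_rw [div_eq_mul_inv]
    rw [variance_mul_const, inv_pow, Real.sq_sqrt hkR.le, ← div_eq_mul_inv, div_le_iff₀ hkR,
      mul_comm]
    exact hpartial k
  have hfactor : (1 - √((k : ℝ) / n)) ^ 2 ≤ (n - k : ℕ) / n := by
    rw [Nat.cast_sub hkn, sub_div, div_self hnR.ne']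
    exact Real.one_sub_sqrt_sq_le (by positivity) ((div_le_one hnR).2 (by exact_mod_cast hkn))
  calc _ ≤ Var[∑ i ∈ range (n - k), X i; μ] / n
        + (1 - √((k : ℝ) / n)) ^ 2 * Var[fun ω => (∑ i ∈ range k, X i) ω / √k; μ] :=
        variance_normalized_sum_sub_le hX hstat hassoc hk hkn
    _ ≤ (n - k : ℕ) * longRunVariance X μ / n + (n - k : ℕ) / n * longRunVariance X μ := by
        gcongr ?_ / _ + ?_
        · exact hpartial _
        · exact mul_le_mul hfactor hnormalized (variance_nonneg _ _) (by positivity)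
    _ = 2 * (n - k : ℕ) * longRunVariance X μ / n := by ring

end StationaryAssociated

end ProbabilityTheory

/-- `X i` stands for the paper's `X_{i+1}`. -/
theorem block_variance_bound_general
    {Ω : Type*} [MeasurableSpace Ω] (μ : Measure Ω) [IsProbabilityMeasure μ]
    (X : ℕ → Ω → ℝ) (hX2 : ∀ n, MemLp (X n) 2 μ)
    (hstat : ∀ n k : ℕ,
      Measure.map (fun ω => fun i : Fin n => X ((i : ℕ) + k) ω) μ
        = Measure.map (fun ω => fun i : Fin n => X (i : ℕ) ω) μ)
    (hassoc : ∀ n : ℕ, IsAssociated μ (fun i : Fin n => X (i : ℕ)))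
    (hsum : Summable (fun j : ℕ => cov μ (X 0) (X (j + 1))))
    (S : ℕ → Ω → ℝ) (hS : ∀ k ω, S k ω = ∑ i ∈ Finset.range k, X i ω)
    (ℓ : ℕ) (hℓ : 1 ≤ ℓ) :
    (∀ n : ℕ, ℓ ≤ n →
      variance (fun ω => S n ω / Real.sqrt n
          - S (n / ℓ * ℓ) ω / Real.sqrt (n / ℓ * ℓ : ℕ)) μ
        ≤ variance (S (n - n / ℓ * ℓ)) μ / n
          + (1 - Real.sqrt ((n / ℓ * ℓ : ℕ) / (n : ℝ))) ^ 2
            * variance (fun ω => S (n / ℓ * ℓ) ω / Real.sqrt (n / ℓ * ℓ : ℕ)) μ) ∧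
    Tendsto
      (fun n : ℕ =>
        variance (fun ω => S n ω / Real.sqrt n
          - S (n / ℓ * ℓ) ω / Real.sqrt (n / ℓ * ℓ : ℕ)) μ)
      atTop (nhds 0) := by
  obtain rfl : S = fun k => ∑ i ∈ Finset.range k, X i := by
    ext k ω
    rw [hS, Finset.sum_apply]
  have hsum' : Summable fun d => cov[X 0, X (d + 1); μ] := by
    simpa only [cov_eq_covariance (hX2 _) (hX2 _)] using hsum
  have hblock : ∀ n, ℓ ≤ n → 0 < n / ℓ * ℓ ∧ n / ℓ * ℓ ≤ n ∧ n - n / ℓ * ℓ ≤ ℓ := fun n hn =>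
    ⟨Nat.mul_pos (Nat.div_pos hn hℓ) hℓ, Nat.div_mul_le_self n ℓ,
      by have := Nat.lt_div_mul_add (a := n) hℓ; omega⟩
  refine ⟨fun n hn => variance_normalized_sum_sub_le hX2 hstat hassoc (hblock n hn).1
    (hblock n hn).2.1, ?_⟩
  have hbound : ∀ᶠ n : ℕ in atTop,
      variance (fun ω => (∑ i ∈ Finset.range n, X i) ω / √n
        - (∑ i ∈ Finset.range (n / ℓ * ℓ), X i) ω / √(n / ℓ * ℓ : ℕ)) μ
        ≤ 2 * ℓ * longRunVariance X μ / n := by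
    filter_upwards [eventually_ge_atTop ℓ] with n hn
    obtain ⟨hk, hkn, hrem⟩ := hblock n hn
    refine (variance_normalized_sum_sub_le_mul hX2 hstat hassoc hsum' hk hkn).trans ?_
    have := longRunVariance_nonneg hX2 hstat hassoc hsum'
    gcongr
  exact tendsto_of_tendsto_of_tendsto_of_le_of_le' tendsto_const_nhds
    (tendsto_const_div_atTop_nhds_zero_nat _) (.of_forall fun _ => variance_nonneg _ _) hbound

/-- Block approximation bound in the proof of Newman's CLT: for a strictly stationary,
associated, mean-zero, square-integrable sequence with finite `σ²`, fixed `ℓ ≥ 1`,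
`n ≥ ℓ` and `m = ⌊n/ℓ⌋`,
`Var(Sₙ/√n - S_{mℓ}/√(mℓ)) ≤ Var(S_{n-mℓ})/n + (1 - √(mℓ/n))² Var(S_{mℓ}/√(mℓ))`,
and for each fixed `ℓ` this quantity tends to `0` as `n → ∞`.
Here `X i` stands for `X_{i+1}` and `S k = X₁ + ⋯ + X_k`. -/
theorem block_variance_bound
    {Ω : Type*} [MeasurableSpace Ω] (μ : Measure Ω) [IsProbabilityMeasure μ]
    (X : ℕ → Ω → ℝ) (hX : ∀ n, Measurable (X n)) (hX2 : ∀ n, MemLp (X n) 2 μ)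
    (hmean : ∀ n, ∫ ω, X n ω ∂μ = 0)
    (hstat : ∀ n k : ℕ,
      Measure.map (fun ω => fun i : Fin n => X ((i : ℕ) + k) ω) μ
        = Measure.map (fun ω => fun i : Fin n => X (i : ℕ) ω) μ)
    (hassoc : ∀ n : ℕ, IsAssociated μ (fun i : Fin n => X (i : ℕ)))
    (hsum : Summable (fun j : ℕ => cov μ (X 0) (X (j + 1))))
    (S : ℕ → Ω → ℝ) (hS : ∀ k ω, S k ω = ∑ i ∈ Finset.range k, X i ω)
    (ℓ : ℕ) (hℓ : 1 ≤ ℓ) :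
    (∀ n : ℕ, ℓ ≤ n →
      variance (fun ω => S n ω / Real.sqrt n
          - S (n / ℓ * ℓ) ω / Real.sqrt (n / ℓ * ℓ : ℕ)) μ
        ≤ variance (S (n - n / ℓ * ℓ)) μ / n
          + (1 - Real.sqrt ((n / ℓ * ℓ : ℕ) / (n : ℝ))) ^ 2
            * variance (fun ω => S (n / ℓ * ℓ) ω / Real.sqrt (n / ℓ * ℓ : ℕ)) μ) ∧
    Tendsto
      (fun n : ℕ =>
        variance (fun ω => S n ω / Real.sqrt n
          - S (n / ℓ * ℓ) ω / Real.sqrt (n / ℓ * ℓ : ℕ)) μ)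
      atTop (nhds 0) :=
  block_variance_bound_general μ X hX2 hstat hassoc hsum S hS ℓ hℓ
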